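/- arXiv:2102.04909 — 9 statements merged into one kernel-verified Lean document; each statement's English description precedes it below -/
import Mathlib

section
/- For every allocation instance with n agents and additive valuations, and every agent i, the three shares satisfy the chain of inequalities PS_i ≥ TPS_i ≥ MMS_i ≥ (n/(2n−1))·TPS_i. -/
open Finset

/-- The value of a bundle `S` under an additive valuation with item values `v`. -/
def val {ι : Type*} (v : ι → ℝ) (S : Finset ι) : ℝ := ∑ j ∈ S, v j

/-- `A` is an allocation: the bundles are pairwise disjoint and cover all items. -/
def isAlloc {ι : Type*} [Fintype ι] [DecidableEq ι] {n : ℕ} (A : Fin n → Finset ι) : Prop :=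
  (∀ i j : Fin n, i ≠ j → Disjoint (A i) (A j)) ∧ Finset.univ.biUnion A = Finset.univ

/-- `t` is the truncated proportional share `TPS(k, S, v)`: the largest `t ≥ 0`
with `(1/k) · Σ_{j ∈ S} min(v j, t) = t`. -/
def isTPS {ι : Type*} (k : ℕ) (S : Finset ι) (v : ι → ℝ) (t : ℝ) : Prop :=
  IsGreatest {t' : ℝ | 0 ≤ t' ∧ (∑ j ∈ S, min (v j) t') / k = t'} t

/-- `μ` is the maximin share of an agent with valuation `v` among `n` agents:
the maximum over partitions into `n` bundles of the minimum bundle value. -/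
def isMMS {ι : Type*} [Fintype ι] [DecidableEq ι] (n : ℕ) (v : ι → ℝ) (μ : ℝ) : Prop :=
  IsGreatest {x : ℝ | ∃ P : Fin n → Finset ι, isAlloc P ∧ x = ⨅ i : Fin n, val v (P i)} μ

/-!
`PS ≥ TPS` because truncating item values only lowers them. For `TPS ≥ MMS`, each bundle of an
optimal MMS partition is still worth at least `μ = MMS` after truncating item values at `μ`, so
`n μ ≤ Σ_j min(v j, μ)`: the map `x ↦ Σ_j min(v j, x) - n x` is nonnegative at `μ` and
nonpositive far to the right, and the intermediate value theorem yields a solution of the TPS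
equation above `μ`.

For `MMS ≥ n/(2n-1) · TPS`, truncate item values at `t = TPS`: they total `n t = (2n-1) c` with
`c = n t/(2n-1)`, and each is at most `t ≤ 2c`. Items of value at most `2c` and total at least `c`
contain a subset worth between `c` and `2c`; cutting it off costs at most `2c`, so by induction the
items split into `n` bundles each worth at least `c`.
-/

open Function

theorem Fin.pairwise_disjoint_cons {α : Type*} [PartialOrder α] [OrderBot α] {k : ℕ} {T : α}
    {Q : Fin k → α} (hT : ∀ a, Disjoint T (Q a)) (hQ : Pairwise (Disjoint on Q)) :
    Pairwise (Disjoint on (Fin.cons T Q : Fin (k + 1) → α)) := by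
  intro a b hab
  cases a using Fin.cases <;> cases b using Fin.cases
  · exact absurd rfl hab
  · exact hT _
  · exact (hT _).symm
  · exact hQ fun h => hab (congrArg Fin.succ h)

theorem exists_subset_sum_mem_Icc {ι : Type*} [DecidableEq ι] {w : ι → ℝ} {c : ℝ} (hc : 0 ≤ c)
    {S : Finset ι} (hw : ∀ j ∈ S, w j ≤ 2 * c) (hS : c ≤ ∑ j ∈ S, w j) :
    ∃ T ⊆ S, c ≤ ∑ j ∈ T, w j ∧ ∑ j ∈ T, w j ≤ 2 * c := by
  induction S using Finset.induction_on with
  | empty => exact ⟨∅, subset_rfl, hS, by simpa using hc⟩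
  | insert a S ha ih =>
    rw [sum_insert ha] at hS
    have hwa := hw a (mem_insert_self a S)
    by_cases hcS : c ≤ ∑ j ∈ S, w j
    · obtain ⟨T, hTS, hT⟩ := ih (fun j hj => hw j (mem_insert_of_mem hj)) hcS
      exact ⟨T, hTS.trans (subset_insert a S), hT⟩
    by_cases hca : c ≤ w a
    · exact ⟨{a}, singleton_subset_iff.2 (mem_insert_self a S), by simpa using hca,
        by simpa using hwa⟩
    · exact ⟨insert a S, subset_rfl, by rwa [sum_insert ha], by rw [sum_insert ha]; linarith⟩

theorem exists_partition_sum_ge {ι : Type*} [DecidableEq ι] {w : ι → ℝ} {c : ℝ} (hc : 0 ≤ c)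
    {n : ℕ} (hn : 1 ≤ n) {S : Finset ι} (hw : ∀ j ∈ S, w j ≤ 2 * c)
    (hS : (2 * n - 1) * c ≤ ∑ j ∈ S, w j) :
    ∃ P : Fin n → Finset ι, Pairwise (Disjoint on P) ∧ univ.biUnion P = S ∧
      ∀ a, c ≤ ∑ j ∈ P a, w j := by
  induction n, hn using Nat.le_induction generalizing S with
  | base =>
    exact ⟨fun _ => S, Subsingleton.pairwise, by simp, fun _ => by norm_num at hS; linarith⟩
  | succ n hn ih =>
    have hn' : (1 : ℝ) ≤ n := by exact_mod_cast hn
    push_cast at hS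
    obtain ⟨T, hTS, hcT, hT2c⟩ := exists_subset_sum_mem_Icc hc hw (by nlinarith)
    have hrest : (2 * n - 1) * c ≤ ∑ j ∈ S \ T, w j := by
      rw [sum_sdiff_eq_sub hTS]; linarith
    obtain ⟨Q, hQd, hQS, hQc⟩ := ih (fun j hj => hw j (sdiff_subset hj)) hrest
    refine ⟨Fin.cons T Q, Fin.pairwise_disjoint_cons (fun a => ?_) hQd, ?_, Fin.cases hcT hQc⟩
    · exact disjoint_sdiff.mono_right (hQS ▸ subset_biUnion_of_mem Q (mem_univ a))
    · rw [← union_sdiff_of_subset hTS, ← hQS]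
      ext j
      simp [Fin.exists_fin_succ]

theorem le_sum_min_of_le_sum {ι : Type*} {B : Finset ι} {u : ι → ℝ} (hu : ∀ j ∈ B, 0 ≤ u j)
    {μ : ℝ} (hμ : 0 ≤ μ) (hB : μ ≤ ∑ j ∈ B, u j) : μ ≤ ∑ j ∈ B, min (u j) μ := by
  by_cases hbig : ∃ j ∈ B, μ ≤ u j
  · obtain ⟨j, hj, hμj⟩ := hbig
    calc μ = min (u j) μ := (min_eq_right hμj).symm
      _ ≤ ∑ j ∈ B, min (u j) μ := single_le_sum (fun j hj => le_min (hu j hj) hμ) hj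
  · push Not at hbig
    rwa [sum_congr rfl fun j hj => min_eq_left (hbig j hj).le]

theorem exists_sum_min_eq_mul_ge {ι : Type*} {k : ℕ} (hk : 1 ≤ k) {S : Finset ι} {v : ι → ℝ}
    (hv : ∀ j ∈ S, 0 ≤ v j) {x : ℝ} (hx : 0 ≤ x) (hkx : k * x ≤ ∑ j ∈ S, min (v j) x) :
    ∃ t, x ≤ t ∧ ∑ j ∈ S, min (v j) t = k * t := by
  set V := ∑ j ∈ S, v j
  have hV : 0 ≤ V := sum_nonneg hv
  have hk' : (1 : ℝ) ≤ k := by exact_mod_cast hk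
  have hcont : ContinuousOn (fun y => ∑ j ∈ S, min (v j) y - k * y) (Set.Icc x (x + V)) := by
    fun_prop
  have hend : ∑ j ∈ S, min (v j) (x + V) - k * (x + V) ≤ 0 := by
    have : ∑ j ∈ S, min (v j) (x + V) ≤ V := sum_le_sum fun j _ => min_le_left _ _
    nlinarith
  obtain ⟨t, ⟨hxt, -⟩, ht⟩ := intermediate_value_Icc' (by linarith) hcont ⟨hend, by linarith⟩
  exact ⟨t, hxt, sub_eq_zero.1 ht⟩

namespace isTPS

variable {ι : Type*} {k : ℕ} {S : Finset ι} {v : ι → ℝ} {t : ℝ}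

theorem sum_min_eq (h : isTPS k S v t) (hk : 1 ≤ k) : ∑ j ∈ S, min (v j) t = k * t := by
  have hk' : (k : ℝ) ≠ 0 := by positivity
  rw [← h.1.2, mul_div_cancel₀ _ hk', h.1.2]

theorem le_sum_div (h : isTPS k S v t) : t ≤ (∑ j ∈ S, v j) / k := by
  rw [← h.1.2]
  gcongr with j
  exact min_le_left _ _

theorem ge_of_mul_le_sum_min (h : isTPS k S v t) (hk : 1 ≤ k) (hv : ∀ j ∈ S, 0 ≤ v j) {x : ℝ}
    (hx : 0 ≤ x) (hkx : k * x ≤ ∑ j ∈ S, min (v j) x) : x ≤ t := by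
  obtain ⟨t', hxt', ht'⟩ := exists_sum_min_eq_mul_ge hk hv hx hkx
  have hk' : (k : ℝ) ≠ 0 := by positivity
  exact hxt'.trans (h.2 ⟨hx.trans hxt', by rw [ht', mul_div_cancel_left₀ _ hk']⟩)

end isTPS

theorem isAlloc.sum_eq {ι : Type*} [Fintype ι] [DecidableEq ι] {n : ℕ} {P : Fin n → Finset ι}
    (hP : isAlloc P) (f : ι → ℝ) : ∑ j, f j = ∑ a, ∑ j ∈ P a, f j := by
  rw [← sum_biUnion fun a _ b _ hab => hP.1 a b hab, hP.2]

namespace isMMS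

variable {ι : Type*} [Fintype ι] [DecidableEq ι] {n : ℕ} {v : ι → ℝ} {μ : ℝ}

theorem nonneg (h : isMMS n v μ) (hn : 1 ≤ n) (hv : ∀ j, 0 ≤ v j) : 0 ≤ μ := by
  obtain ⟨⟨P, -, rfl⟩, -⟩ := h
  have : Nonempty (Fin n) := ⟨⟨0, hn⟩⟩
  exact le_ciInf fun a => sum_nonneg fun j _ => hv j

theorem exists_alloc_le (h : isMMS n v μ) :
    ∃ P : Fin n → Finset ι, isAlloc P ∧ ∀ a, μ ≤ val v (P a) := by
  obtain ⟨⟨P, hP, rfl⟩, -⟩ := h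
  exact ⟨P, hP, fun a => ciInf_le (Set.finite_range _).bddBelow a⟩

theorem le_of_alloc (h : isMMS n v μ) (hn : 1 ≤ n) {P : Fin n → Finset ι} (hP : isAlloc P) {c : ℝ}
    (hc : ∀ a, c ≤ val v (P a)) : c ≤ μ := by
  have : Nonempty (Fin n) := ⟨⟨0, hn⟩⟩
  exact (le_ciInf hc).trans (h.2 ⟨P, hP, rfl⟩)

theorem mul_le_sum_min (h : isMMS n v μ) (hn : 1 ≤ n) (hv : ∀ j, 0 ≤ v j) :
    n * μ ≤ ∑ j, min (v j) μ := by
  obtain ⟨P, hP, hμP⟩ := h.exists_alloc_le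
  rw [hP.sum_eq fun j => min (v j) μ]
  calc (n : ℝ) * μ = ∑ _a : Fin n, μ := by simp
    _ ≤ ∑ a, ∑ j ∈ P a, min (v j) μ :=
      sum_le_sum fun a _ => le_sum_min_of_le_sum (fun j _ => hv j) (h.nonneg hn hv) (hμP a)

theorem le_isTPS (h : isMMS n v μ) (hn : 1 ≤ n) (hv : ∀ j, 0 ≤ v j) {t : ℝ}
    (ht : isTPS n univ v t) : μ ≤ t :=
  ht.ge_of_mul_le_sum_min hn (fun j _ => hv j) (h.nonneg hn hv) (h.mul_le_sum_min hn hv)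

theorem div_mul_isTPS_le (h : isMMS n v μ) (hn : 1 ≤ n) {t : ℝ} (ht : isTPS n univ v t) :
    (n / (2 * n - 1)) * t ≤ μ := by
  have hn' : (1 : ℝ) ≤ n := by exact_mod_cast hn
  have hden : (0 : ℝ) < 2 * n - 1 := by linarith
  set c := (n / (2 * n - 1)) * t
  have hcn : (2 * n - 1) * c = n * t := by
    simp only [c]
    field_simp
  have hc : 0 ≤ c := by nlinarith [ht.1.1]
  have ht2c : t ≤ 2 * c := by nlinarith [ht.1.1]
  obtain ⟨P, hPd, hPS, hPc⟩ := exists_partition_sum_ge (w := fun j => min (v j) t) hc hn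
    (fun j _ => (min_le_right _ _).trans ht2c) (hcn.trans (ht.sum_min_eq hn).symm).le
  exact h.le_of_alloc hn ⟨fun a b hab => hPd hab, hPS⟩
    fun a => (hPc a).trans (sum_le_sum fun j _ => min_le_left _ _)

end isMMS

/-- `PS_i ≥ TPS_i ≥ MMS_i ≥ (n/(2n−1))·TPS_i`. -/
theorem stmt0 {ι : Type*} [Fintype ι] [DecidableEq ι] (n : ℕ) (hn : 1 ≤ n)
    (v : Fin n → ι → ℝ) (hv : ∀ i j, 0 ≤ v i j) (i : Fin n)
    (tps mms : ℝ) (htps : isTPS n Finset.univ (v i) tps) (hmms : isMMS n (v i) mms) :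
    val (v i) Finset.univ / n ≥ tps ∧ tps ≥ mms ∧
      mms ≥ ((n : ℝ) / (2 * (n : ℝ) - 1)) * tps :=
  ⟨htps.le_sum_div, hmms.le_isTPS hn (hv i) htps, hmms.div_mul_isTPS_le hn htps⟩
end

section
/- Let v be an additive valuation over a nonempty finite set M of items and let n ≥ 2. If j is an item of maximum value under v among the items of M, then TPS(n, M, v) = min( v(M)/n , TPS(n−1, M∖{j}, v) ). -/
/-!
Write `F_S(t) = Σ_{i ∈ S} min (v i) t`. When `t ≤ v j`, the item `j` contributes exactly `t`, so
`t` solves `F_M(t) / n = t` iff it solves `F_{M∖{j}}(t) / (n - 1) = t`. When `t` lies above every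
item value, `F_S(t) = v(S)`, so the only such solution is `v(S) / k`, and `v(S) / k` is a solution
as soon as it lies above every item value. For a most valuable item `j`, each of `TPS(n, M)` and
`TPS(n - 1, M ∖ {j})` is therefore either a solution of the other problem (if it is `≤ v j`) or of
the form `v(S) / k`, and comparing them yields both inequalities.
-/

open Finset

section FixedPoint

variable {ι : Type*} {v : ι → ℝ} {S : Finset ι} {k : ℕ} {t : ℝ}

/-- The candidates for `TPS(k, S, v)`, of which `isTPS k S v` picks the greatest. -/
def IsTPSFixedPoint (k : ℕ) (S : Finset ι) (v : ι → ℝ) (t : ℝ) : Prop :=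
  0 ≤ t ∧ (∑ i ∈ S, min (v i) t) / k = t

lemma IsTPSFixedPoint.le_val_div (h : IsTPSFixedPoint k S v t) : t ≤ val v S / k := by
  rw [← h.2]
  exact div_le_div_of_nonneg_right (sum_le_sum fun i _ => min_le_left _ _) k.cast_nonneg

lemma sum_min_eq_val (h : ∀ i ∈ S, v i ≤ t) : ∑ i ∈ S, min (v i) t = val v S :=
  sum_congr rfl fun i hi => min_eq_left (h i hi)

lemma IsTPSFixedPoint.eq_val_div (h : IsTPSFixedPoint k S v t) (hS : ∀ i ∈ S, v i ≤ t) :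
    t = val v S / k := by
  rw [← h.2, sum_min_eq_val hS]

lemma isTPSFixedPoint_val_div (h₀ : 0 ≤ val v S / k) (hS : ∀ i ∈ S, v i ≤ val v S / k) :
    IsTPSFixedPoint k S v (val v S / k) :=
  ⟨h₀, by rw [sum_min_eq_val hS]⟩

lemma isTPSFixedPoint_erase_iff [DecidableEq ι] {M : Finset ι} {n : ℕ} {j : ι} (hn : 2 ≤ n)
    (hj : j ∈ M) (ht : t ≤ v j) :
    IsTPSFixedPoint n M v t ↔ IsTPSFixedPoint (n - 1) (M.erase j) v t := by
  have hn₀ : (n : ℝ) ≠ 0 := by positivity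
  have hn₁ : ((n - 1 : ℕ) : ℝ) ≠ 0 := Nat.cast_ne_zero.2 (by omega)
  unfold IsTPSFixedPoint
  rw [← add_sum_erase M _ hj, min_eq_right ht, div_eq_iff hn₀, div_eq_iff hn₁,
    Nat.cast_sub (by omega : 1 ≤ n), Nat.cast_one]
  constructor <;> rintro ⟨ht₀, h⟩ <;> exact ⟨ht₀, by linarith⟩

end FixedPoint

section MaxItem

variable {ι : Type*} [DecidableEq ι] {M : Finset ι} {v : ι → ℝ} {n : ℕ} {j : ι} {t₁ t₂ : ℝ}

lemma isTPS_le_isTPS_erase (hn : 2 ≤ n) (hjM : j ∈ M) (hjmax : ∀ i ∈ M, v i ≤ v j)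
    (h₁ : isTPS n M v t₁) (h₂ : isTPS (n - 1) (M.erase j) v t₂) : t₁ ≤ t₂ := by
  have hfp₁ : IsTPSFixedPoint n M v t₁ := h₁.1
  rcases le_or_gt t₁ (v j) with hle | hlt
  · exact h₂.2 ((isTPSFixedPoint_erase_iff hn hjM hle).1 hfp₁)
  have ht₁ : t₁ = val v M / n := hfp₁.eq_val_div fun i hi => (hjmax i hi).trans hlt.le
  have hval : val v M = v j + val v (M.erase j) := (add_sum_erase M v hjM).symm
  have hn₁ : (0 : ℝ) < n - 1 := by
    have : (2 : ℝ) ≤ n := by exact_mod_cast hn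
    linarith
  -- `v(M ∖ {j}) = n t₁ - v j ≥ (n - 1) t₁`
  have hlt' : t₁ ≤ val v (M.erase j) / (n - 1 : ℕ) := by
    rw [Nat.cast_sub (by omega : 1 ≤ n), Nat.cast_one, le_div_iff₀ hn₁]
    rw [eq_div_iff (by positivity)] at ht₁
    linarith
  exact hlt'.trans (h₂.2 (isTPSFixedPoint_val_div (hfp₁.1.trans hlt')
    fun i hi => (hjmax i (mem_of_mem_erase hi)).trans (hlt.le.trans hlt')))

lemma min_val_div_isTPS_erase_le_isTPS (hv : ∀ i, 0 ≤ v i) (hn : 2 ≤ n) (hjM : j ∈ M)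
    (hjmax : ∀ i ∈ M, v i ≤ v j) (h₁ : isTPS n M v t₁) (h₂ : isTPS (n - 1) (M.erase j) v t₂) :
    min (val v M / n) t₂ ≤ t₁ := by
  have hfp₂ : IsTPSFixedPoint (n - 1) (M.erase j) v t₂ := h₂.1
  rcases le_or_gt t₂ (v j) with hle | hlt
  · exact (min_le_right _ _).trans (h₁.2 ((isTPSFixedPoint_erase_iff hn hjM hle).2 hfp₂))
  have ht₂ : t₂ = val v (M.erase j) / (n - 1 : ℕ) :=
    hfp₂.eq_val_div fun i hi => (hjmax i (mem_of_mem_erase hi)).trans hlt.le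
  have hval : val v M = v j + val v (M.erase j) := (add_sum_erase M v hjM).symm
  have hn₁ : (0 : ℝ) < n - 1 := by
    have : (2 : ℝ) ≤ n := by exact_mod_cast hn
    linarith
  -- `n v j ≤ v j + (n - 1) t₂ = v(M)`
  have hvj : v j ≤ val v M / n := by
    rw [Nat.cast_sub (by omega : 1 ≤ n), Nat.cast_one, eq_div_iff hn₁.ne'] at ht₂
    rw [le_div_iff₀ (by linarith)]
    nlinarith
  exact (min_le_left _ _).trans
    (h₁.2 (isTPSFixedPoint_val_div ((hv j).trans hvj) fun i hi => (hjmax i hi).trans hvj))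

end MaxItem

theorem stmt1_general {ι : Type*} [DecidableEq ι] (M : Finset ι)
    (v : ι → ℝ) (hv : ∀ j, 0 ≤ v j) (n : ℕ) (hn : 2 ≤ n)
    (j : ι) (hjM : j ∈ M) (hjmax : ∀ j' ∈ M, v j' ≤ v j)
    (t₁ t₂ : ℝ) (h₁ : isTPS n M v t₁) (h₂ : isTPS (n - 1) (M.erase j) v t₂) :
    t₁ = min (val v M / n) t₂ :=
  le_antisymm (le_min (IsTPSFixedPoint.le_val_div h₁.1)
      (isTPS_le_isTPS_erase hn hjM hjmax h₁ h₂))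
    (min_val_div_isTPS_erase_le_isTPS hv hn hjM hjmax h₁ h₂)

/-- if `j` has maximum value among items of a nonempty `M` and `n ≥ 2`,
then `TPS(n, M, v) = min(v(M)/n, TPS(n−1, M∖{j}, v))`. -/
theorem stmt1 {ι : Type*} [DecidableEq ι] (M : Finset ι) (hM : M.Nonempty)
    (v : ι → ℝ) (hv : ∀ j, 0 ≤ v j) (n : ℕ) (hn : 2 ≤ n)
    (j : ι) (hjM : j ∈ M) (hjmax : ∀ j' ∈ M, v j' ≤ v j)
    (t₁ t₂ : ℝ) (h₁ : isTPS n M v t₁) (h₂ : isTPS (n - 1) (M.erase j) v t₂) :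
    t₁ = min (val v M / n) t₂ :=
  stmt1_general M v hv n hn j hjM hjmax t₁ t₂ h₁ h₂
end

section
/- Let v be an additive valuation over a finite set M of items and let n ≥ 2. Then for every single item e ∈ M, TPS(n−1, M∖{e}, v) ≥ TPS(n, M, v). -/
/-!
Removing one item `e` from `M` and one agent loses at most `t` from the truncated sum
`Σ_{j ∈ M} min (v j) t = n t` at `t = TPS(n, M, v)`, so `t` lies below the truncated mean
`g(t) = (1/(n-1)) Σ_{j ∈ M∖{e}} min (v j) t`. Since `g` is continuous and bounded by
`val v (M∖{e}) / (n-1)`, the intermediate value theorem gives a fixed point of `g` above `t`,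
and `TPS(n-1, M∖{e}, v)` is the largest such fixed point.
-/

open Finset

namespace TPS

variable {ι : Type*} (k : ℕ) (S : Finset ι) (v : ι → ℝ)

noncomputable def truncMean (t : ℝ) : ℝ := (∑ j ∈ S, min (v j) t) / k

theorem continuous_truncMean : Continuous (truncMean k S v) :=
  (continuous_finsetSum _ fun _ _ => continuous_const.min continuous_id).div_const _

theorem truncMean_le_val_div (t : ℝ) : truncMean k S v t ≤ val v S / k :=
  div_le_div_of_nonneg_right (sum_le_sum fun _ _ => min_le_left _ _) k.cast_nonneg

theorem exists_fixedPoint_truncMean_ge {t : ℝ} (ht : t ≤ truncMean k S v t) :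
    ∃ s, t ≤ s ∧ truncMean k S v s = s := by
  set B := max t (val v S / k)
  have hB : truncMean k S v B ≤ B := (truncMean_le_val_div k S v B).trans (le_max_right _ _)
  obtain ⟨s, ⟨hts, -⟩, hs⟩ := intermediate_value_Icc' (le_max_left t _)
    ((continuous_truncMean k S v).sub continuous_id).continuousOn
    (show (0 : ℝ) ∈ Set.Icc (truncMean k S v B - B) (truncMean k S v t - t) from
      ⟨by linarith, by linarith⟩)
  exact ⟨s, hts, sub_eq_zero.mp hs⟩

variable {k S v}

theorem _root_.isTPS.le_of_le_truncMean {t' t : ℝ} (h : isTPS k S v t') (ht₀ : 0 ≤ t)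
    (ht : t ≤ truncMean k S v t) : t ≤ t' := by
  obtain ⟨s, hts, hs⟩ := exists_fixedPoint_truncMean_ge k S v ht
  exact hts.trans (h.2 ⟨ht₀.trans hts, hs⟩)

theorem le_truncMean_erase [DecidableEq ι] {n : ℕ} (hn : 2 ≤ n) {e : ι} (he : e ∈ S) {t : ℝ}
    (ht : truncMean n S v t = t) : t ≤ truncMean (n - 1) (S.erase e) v t := by
  have hn₀ : (n : ℝ) ≠ 0 := by positivity
  have hsum : ∑ j ∈ S, min (v j) t = n * t := by
    rw [truncMean, div_eq_iff hn₀] at ht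
    linarith
  have herase := sum_erase_add S (fun j => min (v j) t) he
  have hpos : (0 : ℝ) < (n - 1 : ℕ) := by exact_mod_cast (by omega : 0 < n - 1)
  rw [truncMean, le_div_iff₀ hpos, Nat.cast_sub (by omega : 1 ≤ n), Nat.cast_one]
  linarith [min_le_right (v e) t]

end TPS

theorem stmt2_general {ι : Type*} [DecidableEq ι] (M : Finset ι)
    (v : ι → ℝ) (n : ℕ) (hn : 2 ≤ n)
    (e : ι) (he : e ∈ M)
    (t₁ t₂ : ℝ) (h₁ : isTPS n M v t₁) (h₂ : isTPS (n - 1) (M.erase e) v t₂) :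
    t₂ ≥ t₁ := by
  obtain ⟨⟨ht₁₀, ht₁⟩, -⟩ := h₁
  exact h₂.le_of_le_truncMean ht₁₀ (TPS.le_truncMean_erase hn he ht₁)

/-- for `n ≥ 2` and any item `e ∈ M`,
`TPS(n−1, M∖{e}, v) ≥ TPS(n, M, v)`. -/
theorem stmt2 {ι : Type*} [DecidableEq ι] (M : Finset ι)
    (v : ι → ℝ) (hv : ∀ j, 0 ≤ v j) (n : ℕ) (hn : 2 ≤ n)
    (e : ι) (he : e ∈ M)
    (t₁ t₂ : ℝ) (h₁ : isTPS n M v t₁) (h₂ : isTPS (n - 1) (M.erase e) v t₂) :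
    t₂ ≥ t₁ :=
  stmt2_general M v n hn e he t₁ t₂ h₁ h₂
end

section
/- In every allocation instance with n agents and additive valuations, every EFX allocation A = (A_1,…,A_n) gives every agent i value v_i(A_i) at least (n/(2n−1))·TPS_i, i.e., at least an n/(2n−1) fraction of her truncated proportional share. -/
open Finset

/-- An allocation is EFX (envy-free up to any good) if for all agents `i, j`
and every item `g ∈ A j`, `v_i(A_i) ≥ v_i(A_j ∖ {g})`. -/
def isEFX {ι : Type*} [Fintype ι] [DecidableEq ι] {n : ℕ} (v : Fin n → ι → ℝ)
    (A : Fin n → Finset ι) : Prop :=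
  ∀ i j : Fin n, ∀ g ∈ A j, val (v i) (A i) ≥ val (v i) ((A j).erase g)

theorem isTPS.sum_min_eq_s4 {ι : Type*} {k : ℕ} {S : Finset ι} {v : ι → ℝ} {t : ℝ}
    (h : isTPS k S v t) (hk : k ≠ 0) : ∑ j ∈ S, min (v j) t = k * t := by
  rw [(div_eq_iff (Nat.cast_ne_zero.mpr hk)).mp h.1.2, mul_comm]

theorem isAlloc.sum_eq_sum_sum {ι : Type*} [Fintype ι] [DecidableEq ι] {n : ℕ}
    {A : Fin n → Finset ι} (hA : isAlloc A) (f : ι → ℝ) :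
    ∑ g, f g = ∑ j, ∑ g ∈ A j, f g := by
  rw [← hA.2, sum_biUnion fun a _ b _ hab => hA.1 a b hab]

theorem sum_min_le_max_of_val_erase_le {ι : Type*} [DecidableEq ι] {v : ι → ℝ}
    (hv : ∀ g, 0 ≤ v g) {B : Finset ι} {x t : ℝ} (ht : 0 ≤ t)
    (hB : ∀ g ∈ B, val v (B.erase g) ≤ x) :
    ∑ g ∈ B, min (v g) t ≤ max t (2 * x) := by
  rcases le_or_gt #B 1 with hcard | hcard
  · calc ∑ g ∈ B, min (v g) t ≤ #B • t :=
          sum_le_card_nsmul _ _ _ fun g _ => min_le_right _ _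
      _ ≤ 1 • t := nsmul_le_nsmul_left ht hcard
      _ ≤ max t (2 * x) := by rw [one_nsmul]; exact le_max_left _ _
  · obtain ⟨g, hg, hmin⟩ := exists_min_image B v (card_pos.mp (by omega))
    obtain ⟨h, hh⟩ : (B.erase g).Nonempty := by
      rw [← card_pos, card_erase_of_mem hg]; omega
    have hrest : val v (B.erase g) ≤ x := hB g hg
    have hg_le : v g ≤ val v (B.erase g) :=
      (hmin h (mem_of_mem_erase hh)).trans (single_le_sum (fun k _ => hv k) hh)
    calc ∑ g' ∈ B, min (v g') t = min (v g) t + ∑ g' ∈ B.erase g, min (v g') t :=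
          (add_sum_erase _ _ hg).symm
      _ ≤ v g + val v (B.erase g) :=
          add_le_add (min_le_left _ _) (sum_le_sum fun _ _ => min_le_left _ _)
      _ ≤ 2 * x := by linarith
      _ ≤ max t (2 * x) := le_max_right _ _

theorem div_mul_le_of_mul_le_add_mul_max {n t x : ℝ} (hn : 1 ≤ n) (ht : 0 ≤ t)
    (h : n * t ≤ x + (n - 1) * max t (2 * x)) : n / (2 * n - 1) * t ≤ x := by
  rw [div_mul_eq_mul_div, div_le_iff₀ (by linarith)]
  rcases le_total t (2 * x) with htx | htx
  · rw [max_eq_right htx] at h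
    linarith
  · rw [max_eq_left htx] at h
    nlinarith

theorem stmt4_general {ι : Type*} [Fintype ι] [DecidableEq ι] (n : ℕ)
    (v : Fin n → ι → ℝ) (hv : ∀ i j, 0 ≤ v i j)
    (A : Fin n → Finset ι) (hA : isAlloc A) (hEFX : isEFX v A)
    (i : Fin n) (tps : ℝ) (htps : isTPS n Finset.univ (v i) tps) :
    val (v i) (A i) ≥ ((n : ℝ) / (2 * (n : ℝ) - 1)) * tps := by
  have hn : 1 ≤ n := i.pos
  have ht : 0 ≤ tps := htps.1.1
  set x := val (v i) (A i)
  set f : ι → ℝ := fun g => min (v i g) tps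
  have hown : ∑ g ∈ A i, f g ≤ x := sum_le_sum fun _ _ => min_le_left _ _
  have hothers :
      ∑ j ∈ univ.erase i, ∑ g ∈ A j, f g ≤ ((n : ℝ) - 1) * max tps (2 * x) := by
    have hcard : (#(univ.erase i) : ℝ) = n - 1 := by
      rw [card_erase_of_mem (mem_univ i), card_fin, Nat.cast_sub hn, Nat.cast_one]
    rw [← hcard, ← nsmul_eq_mul]
    exact sum_le_card_nsmul _ _ _ fun j _ =>
      sum_min_le_max_of_val_erase_le (hv i) ht (hEFX i j)
  have htotal :
      (n : ℝ) * tps = ∑ g ∈ A i, f g + ∑ j ∈ univ.erase i, ∑ g ∈ A j, f g := by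
    rw [← htps.sum_min_eq_s4 (by omega), hA.sum_eq_sum_sum, ← add_sum_erase _ _ (mem_univ i)]
  exact div_mul_le_of_mul_le_add_mul_max (by exact_mod_cast hn) ht (by linarith)

/-- every EFX allocation gives every agent at least an
`n/(2n−1)` fraction of her truncated proportional share. -/
theorem stmt4 {ι : Type*} [Fintype ι] [DecidableEq ι] (n : ℕ) (hn : 1 ≤ n)
    (v : Fin n → ι → ℝ) (hv : ∀ i j, 0 ≤ v i j)
    (A : Fin n → Finset ι) (hA : isAlloc A) (hEFX : isEFX v A)
    (i : Fin n) (tps : ℝ) (htps : isTPS n Finset.univ (v i) tps) :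
    val (v i) (A i) ≥ ((n : ℝ) / (2 * (n : ℝ) - 1)) * tps :=
  stmt4_general n v hv A hA hEFX i tps htps
end

section
/- For every allocation instance with n agents and additive valuations, there exists an allocation A = (A_1,…,A_n) such that every agent i receives value v_i(A_i) at least (n/(2n−1))·TPS_i, i.e., at least an n/(2n−1) fraction of her truncated proportional share. -/
/-
Let `τ_i = n/(2n-1) · TPS_i`, so that `Σ_j min(v_i(j), TPS_i) = n · TPS_i = (2n-1) · τ_i` and
`TPS_i ≤ 2τ_i`. Repeatedly take an inclusion-minimal bundle that some remaining agent values at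
least at her `τ`, and give it to her. By minimality the bundle is a single item, or each of its
items, and the bundle minus any one item, is worth less than `τ_{i'}` to every remaining agent
`i'`; either way it costs `i'` at most `2τ_{i'}` of truncated value. So while `k` agents remain,
each still has truncated value at least `(2k-1)·τ` in the remaining items, and the last agent
takes all that is left.
-/

open Finset

def truncVal {ι : Type*} (v : ι → ℝ) (t : ℝ) (S : Finset ι) : ℝ := ∑ j ∈ S, min (v j) t

lemma truncVal_le_val {ι : Type*} (v : ι → ℝ) (t : ℝ) (S : Finset ι) :
    truncVal v t S ≤ val v S :=
  sum_le_sum fun _ _ => min_le_left _ _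

lemma truncVal_eq_of_isTPS {ι : Type*} {k : ℕ} {S : Finset ι} {v : ι → ℝ} {t : ℝ} (hk : k ≠ 0)
    (h : isTPS k S v t) : truncVal v t S = k * t := by
  have := h.1.2
  rw [div_eq_iff (by exact_mod_cast hk)] at this
  rw [truncVal, this, mul_comm]

namespace Finset

variable {α ι : Type*} [DecidableEq α] [DecidableEq ι] {T : Finset α} {i : α} {B : α → Finset ι}
  {C : Finset ι}

lemma biUnion_update_of_mem (hi : i ∈ T) :
    T.biUnion (Function.update B i C) = C ∪ (T.erase i).biUnion B := by
  rw [← insert_erase hi, biUnion_insert, Function.update_self, erase_insert (notMem_erase i T)]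
  exact congrArg _ (biUnion_congr rfl fun j hj => Function.update_of_ne (ne_of_mem_erase hj) _ _)

lemma pairwiseDisjoint_update_of_disjoint_biUnion (hi : i ∈ T)
    (hB : (T.erase i : Set α).PairwiseDisjoint B) (hC : Disjoint C ((T.erase i).biUnion B)) :
    (T : Set α).PairwiseDisjoint (Function.update B i C) := by
  have hupd : ∀ j ∈ T.erase i, Function.update B i C j = B j := fun j hj =>
    Function.update_of_ne (ne_of_mem_erase hj) _ _
  rw [← insert_erase hi, coe_insert]
  refine (hB.mono_on fun j hj => (hupd j hj).le).insert fun j hj _ => ?_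
  rw [Function.update_self, hupd j hj]
  exact hC.mono_right (subset_biUnion_of_mem B hj)

end Finset

section Allocation

variable {α ι : Type*} [DecidableEq ι] (v : α → ι → ℝ) (t τ : α → ℝ)

theorem exists_bundle_truncVal_le (hτ : ∀ i, 0 ≤ τ i) (ht : ∀ i, t i ≤ 2 * τ i)
    {T : Finset α} {S : Finset ι} (hS : ∃ i ∈ T, τ i ≤ val (v i) S) :
    ∃ i ∈ T, ∃ B ⊆ S, τ i ≤ val (v i) B ∧ ∀ i' ∈ T, truncVal (v i') (t i') B ≤ 2 * τ i' := by
  obtain ⟨B, hBS, hB⟩ :=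
    exists_minimal_le_of_wellFoundedLT (fun B => ∃ i ∈ T, τ i ≤ val (v i) B) S hS
  obtain ⟨i, hi, hiB⟩ := hB.prop
  refine ⟨i, hi, B, hBS, hiB, fun i' hi' => ?_⟩
  obtain rfl | ⟨j, hj⟩ := B.eq_empty_or_nonempty
  · simpa [truncVal] using hτ i'
  rw [truncVal, ← add_sum_erase _ _ hj]
  obtain hrest | ⟨j', hj'⟩ := (B.erase j).eq_empty_or_nonempty
  · rw [hrest, sum_empty, add_zero]
    exact (min_le_right _ _).trans (ht i')
  have hsmall : ∀ B' ⊂ B, val (v i') B' < τ i' := fun B' hB' =>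
    lt_of_not_ge fun h => hB.not_prop_of_lt hB' ⟨i', hi', h⟩
  have hj_small : v i' j < τ i' := by
    have hsub : {j} ⊂ B :=
      (ssubset_iff_of_subset (singleton_subset_iff.2 hj)).2 ⟨j', mem_of_mem_erase hj', by
        simpa using ne_of_mem_erase hj'⟩
    simpa [_root_.val] using hsmall _ hsub
  have hrest_small := (truncVal_le_val (v i') (t i') _).trans_lt (hsmall _ (erase_ssubset hj))
  rw [truncVal] at hrest_small
  linarith [min_le_left (v i' j) (t i')]

theorem exists_partition_of_le_truncVal [DecidableEq α] (hτ : ∀ i, 0 ≤ τ i)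
    (ht : ∀ i, t i ≤ 2 * τ i) (T : Finset α) (S : Finset ι) (hT : T.Nonempty)
    (hshare : ∀ i ∈ T, (2 * #T - 1) * τ i ≤ truncVal (v i) (t i) S) :
    ∃ B : α → Finset ι, (T : Set α).PairwiseDisjoint B ∧ T.biUnion B = S ∧
      ∀ i ∈ T, τ i ≤ val (v i) (B i) := by
  induction T using Finset.strongInduction generalizing S with
  | H T ih =>
  obtain ⟨i, rfl⟩ | hTnt := hT.exists_eq_singleton_or_nontrivial
  · refine ⟨fun _ => S, by simp, by simp, fun i hi => ?_⟩
    obtain rfl := mem_singleton.1 hi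
    have := hshare i (mem_singleton_self i)
    simp only [card_singleton, Nat.cast_one] at this
    linarith [truncVal_le_val (v i) (t i) S]
  have hS : ∃ i ∈ T, τ i ≤ val (v i) S := by
    obtain ⟨i, hi⟩ := hT
    have hcard : (1 : ℝ) ≤ #T := by exact_mod_cast card_pos.2 ⟨i, hi⟩
    refine ⟨i, hi, ?_⟩
    nlinarith [hshare i hi, truncVal_le_val (v i) (t i) S, hτ i]
  obtain ⟨i, hi, C, hCS, hiC, hC⟩ := exists_bundle_truncVal_le v t τ hτ ht hS
  have hshare' : ∀ i' ∈ T.erase i,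
      (2 * #(T.erase i) - 1) * τ i' ≤ truncVal (v i') (t i') (S \ C) := by
    intro i' hi'
    have hi'T := mem_of_mem_erase hi'
    have hcard : (#(T.erase i) : ℝ) + 1 = #T := by exact_mod_cast card_erase_add_one hi
    have hsplit : truncVal (v i') (t i') (S \ C) + truncVal (v i') (t i') C =
        truncVal (v i') (t i') S := sum_sdiff hCS
    have := hshare i' hi'T
    rw [← hcard] at this
    linarith [hC i' hi'T]
  obtain ⟨B, hBdisj, hBcover, hB⟩ :=
    ih (T.erase i) (erase_ssubset hi) (S \ C) hTnt.erase_nonempty hshare'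
  refine ⟨Function.update B i C, ?_, ?_, fun j hj => ?_⟩
  · exact pairwiseDisjoint_update_of_disjoint_biUnion hi hBdisj (hBcover ▸ disjoint_sdiff)
  · rw [biUnion_update_of_mem hi, hBcover, union_sdiff_of_subset hCS]
  · obtain rfl | hji := eq_or_ne j i
    · simpa using hiC
    · simpa [hji] using hB j (mem_erase.2 ⟨hji, hj⟩)

end Allocation

theorem stmt5_general {ι : Type*} [Fintype ι] [DecidableEq ι] (n : ℕ) (hn : 1 ≤ n)
    (v : Fin n → ι → ℝ)
    (tps : Fin n → ℝ) (htps : ∀ i, isTPS n Finset.univ (v i) (tps i)) :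
    ∃ A : Fin n → Finset ι, isAlloc A ∧
      ∀ i, val (v i) (A i) ≥ ((n : ℝ) / (2 * (n : ℝ) - 1)) * tps i := by
  have hd : (0 : ℝ) < 2 * n - 1 := by
    have : (1 : ℝ) ≤ n := by exact_mod_cast hn
    linarith
  set τ : Fin n → ℝ := fun i => (n : ℝ) / (2 * n - 1) * tps i
  have htps0 : ∀ i, 0 ≤ tps i := fun i => (htps i).1.1
  have hτ : ∀ i, 0 ≤ τ i := fun i => by have := htps0 i; positivity
  have htps_le : ∀ i, tps i ≤ 2 * τ i := fun i => by
    have : 2 * τ i = tps i + tps i / (2 * n - 1) := by simp only [τ]; field_simp; ring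
    linarith [div_nonneg (htps0 i) hd.le]
  have hshare : ∀ i ∈ univ,
      (2 * #(univ : Finset (Fin n)) - 1) * τ i ≤ truncVal (v i) (tps i) univ := by
    intro i _
    rw [truncVal_eq_of_isTPS (by omega) (htps i), card_univ, Fintype.card_fin]
    exact le_of_eq (by simp only [τ]; field_simp)
  obtain ⟨A, hdisj, hcover, hA⟩ := exists_partition_of_le_truncVal v tps τ hτ htps_le univ univ
    (univ_nonempty_iff.2 ⟨⟨0, hn⟩⟩) hshare
  exact ⟨A, ⟨fun i j hij => hdisj (mem_univ i) (mem_univ j) hij, hcover⟩,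
    fun i => hA i (mem_univ i)⟩

/-- there always exists an allocation giving every agent at least
an `n/(2n−1)` fraction of her truncated proportional share. -/
theorem stmt5 {ι : Type*} [Fintype ι] [DecidableEq ι] (n : ℕ) (hn : 1 ≤ n)
    (v : Fin n → ι → ℝ) (hv : ∀ i j, 0 ≤ v i j)
    (tps : Fin n → ℝ) (htps : ∀ i, isTPS n Finset.univ (v i) (tps i)) :
    ∃ A : Fin n → Finset ι, isAlloc A ∧
      ∀ i, val (v i) (A i) ≥ ((n : ℝ) / (2 * (n : ℝ) - 1)) * tps i :=
  stmt5_general n hn v tps htps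
end

section
/- For every n ≥ 1, consider the allocation instance with n agents and 2n−1 items in which every agent values every item at exactly 1. Then: (a) for every agent i, TPS_i = (2n−1)/n; (b) for every agent i, MMS_i = 1 (hence TPS_i = ((2n−1)/n)·MMS_i); and (c) in every allocation, at least one agent receives value at most 1, i.e., at most an n/(2n−1) fraction of her TPS. -/
/-
With all items worth `1`, a bundle is worth its cardinality. Since `2n - 1 < 2n`, the pigeonhole
principle gives every allocation a bundle with at most one item, which is (c) and the upper bound
in (b); any surjection of the items onto the agents gives an allocation with no empty bundle, so
the MMS is exactly `1`. For the TPS, a threshold `t ≥ 1` leaves every item untruncated, and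
`(2n - 1)/n ≥ 1` solves the fixed-point equation, while every solution is at most
`(1/n) · Σ 1 = (2n - 1)/n`.
-/

open Finset

lemma val_const_one {ι : Type*} (S : Finset ι) : val (fun _ => (1 : ℝ)) S = #S := by
  simp [_root_.val]

section Allocation

variable {ι : Type*} [Fintype ι] [DecidableEq ι] {n : ℕ}

lemma isAlloc_fibers (f : ι → Fin n) : isAlloc (fun i => univ.filter (f · = i)) := by
  refine ⟨fun i j hij => disjoint_filter.mpr fun _ _ hi hj => hij (hi ▸ hj), ?_⟩
  ext x
  simp

lemma sum_card_eq_of_isAlloc {A : Fin n → Finset ι} (hA : isAlloc A) :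
    ∑ i, #(A i) = Fintype.card ι := by
  rw [← card_biUnion fun i _ j _ hij => hA.1 i j hij, hA.2, card_univ]

lemma exists_card_le_one_of_isAlloc (hcard : Fintype.card ι < 2 * n)
    {A : Fin n → Finset ι} (hA : isAlloc A) : ∃ i, #(A i) ≤ 1 := by
  have hlt : ∑ i, #(A i) < ∑ _ : Fin n, 2 := by
    simpa [sum_card_eq_of_isAlloc hA, mul_comm] using hcard
  obtain ⟨i, -, hi⟩ := exists_lt_of_sum_lt hlt
  exact ⟨i, Nat.le_of_lt_succ hi⟩

lemma exists_val_const_one_le_one_of_isAlloc (hcard : Fintype.card ι < 2 * n)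
    {A : Fin n → Finset ι} (hA : isAlloc A) : ∃ i, val (fun _ => (1 : ℝ)) (A i) ≤ 1 := by
  obtain ⟨i, hi⟩ := exists_card_le_one_of_isAlloc hcard hA
  exact ⟨i, by rw [val_const_one]; exact_mod_cast hi⟩

lemma exists_isAlloc_forall_nonempty (hn : 0 < n) (hcard : n ≤ Fintype.card ι) :
    ∃ P : Fin n → Finset ι, isAlloc P ∧ ∀ i, (P i).Nonempty := by
  obtain ⟨f, hf⟩ : ∃ f : ι → Fin n, Function.Surjective f :=
    Function.exists_surjective_iff.mpr
      ⟨⟨fun _ => ⟨0, hn⟩⟩,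
        Function.Embedding.nonempty_of_card_le (by rwa [Fintype.card_fin])⟩
  refine ⟨_, isAlloc_fibers f, fun i => ?_⟩
  obtain ⟨x, hx⟩ := hf i
  exact ⟨x, by simpa using hx⟩

lemma isMMS_of_isAlloc {v : ι → ℝ} {μ : ℝ} {P : Fin n → Finset ι} (hP : isAlloc P)
    (hPμ : ∀ i, μ ≤ val v (P i))
    (hle : ∀ A : Fin n → Finset ι, isAlloc A → ∃ i, val v (A i) ≤ μ) :
    isMMS n v μ := by
  have hinf_le : ∀ A : Fin n → Finset ι, isAlloc A → ⨅ i, val v (A i) ≤ μ := fun A hA =>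
    let ⟨i, hi⟩ := hle A hA
    ciInf_le_of_le (Set.finite_range _).bddBelow i hi
  have : Nonempty (Fin n) := ⟨(hle P hP).choose⟩
  exact ⟨⟨P, hP, le_antisymm (le_ciInf hPμ) (hinf_le P hP)⟩,
    fun _ ⟨A, hA, hx⟩ => hx ▸ hinf_le A hA⟩

lemma isMMS_const_one (hn : 0 < n) (hcard_ge : n ≤ Fintype.card ι)
    (hcard_lt : Fintype.card ι < 2 * n) : isMMS n (fun _ : ι => (1 : ℝ)) 1 := by
  obtain ⟨P, hP, hne⟩ := exists_isAlloc_forall_nonempty hn hcard_ge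
  refine isMMS_of_isAlloc hP (fun i => ?_) (fun A hA => ?_)
  · rw [val_const_one]
    exact_mod_cast (hne i).card_pos
  · exact exists_val_const_one_le_one_of_isAlloc hcard_lt hA

end Allocation

lemma isTPS_const {ι : Type*} {k : ℕ} {S : Finset ι} {c : ℝ} (hc : 0 ≤ c) (hk : 0 < k)
    (hkS : k ≤ #S) : isTPS k S (fun _ => c) (#S * c / k) := by
  have hk' : (0 : ℝ) < k := by exact_mod_cast hk
  have hkS' : (k : ℝ) ≤ #S := by exact_mod_cast hkS
  have hct : c ≤ #S * c / k := by
    rw [le_div_iff₀ hk', mul_comm c]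
    exact mul_le_mul_of_nonneg_right hkS' hc
  refine ⟨⟨hc.trans hct, ?_⟩, fun t ⟨_, ht⟩ => ?_⟩
  · simp [min_eq_left hct]
  · rw [← ht]
    gcongr
    calc ∑ _ ∈ S, min c t ≤ ∑ _ ∈ S, c := sum_le_sum fun _ _ => min_le_left c t
      _ = #S * c := by simp

/-- in the instance with `n` agents and `2n−1` items all valued at `1`:
(a) every agent's TPS is `(2n−1)/n`; (b) every agent's MMS is `1`
(hence `TPS = ((2n−1)/n)·MMS`); and (c) in every allocation some agent gets value
at most `1`, i.e. at most an `n/(2n−1)` fraction of her TPS. -/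
theorem stmt6 (n : ℕ) (hn : 1 ≤ n) :
    isTPS n (Finset.univ : Finset (Fin (2 * n - 1))) (fun _ => (1 : ℝ))
        ((2 * (n : ℝ) - 1) / n) ∧
    isMMS (ι := Fin (2 * n - 1)) n (fun _ => (1 : ℝ)) 1 ∧
    (∀ A : Fin n → Finset (Fin (2 * n - 1)), isAlloc A →
      ∃ i, val (fun _ => (1 : ℝ)) (A i) ≤ 1) := by
  have hcard_ge : n ≤ Fintype.card (Fin (2 * n - 1)) := by rw [Fintype.card_fin]; omega
  have hcard_lt : Fintype.card (Fin (2 * n - 1)) < 2 * n := by rw [Fintype.card_fin]; omega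
  refine ⟨?_, isMMS_const_one hn hcard_ge hcard_lt,
    fun _ hA => exists_val_const_one_le_one_of_isAlloc hcard_lt hA⟩
  convert isTPS_const (S := (univ : Finset (Fin (2 * n - 1)))) zero_le_one hn
    (by rwa [card_univ]) using 1
  simp [Nat.cast_sub (by omega : 1 ≤ 2 * n)]
end

section
/- For every n ≥ 2 and every ε with 0 < ε < 1, consider the instance with n agents and 2n−1 items {s_1,…,s_n, b_1,…,b_{n−1}} in which each agent i values s_i at 1+ε, values s_j at 1 − ε/(n−1) for each j ≠ i, and values b_j at n for each 1 ≤ j ≤ n−1. Then for every agent i, MMS_i = n and PS_i = n. -/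
open Finset

/-! Give all small items to one agent and one big item to each of the other `n - 1` agents.
The small items are worth `(1 + ε) + (n - 1)(1 - ε/(n - 1)) = n` in total, so every bundle is worth
exactly `n` and the total value is `n²`. A partition into bundles of equal value is optimal for the
maximin share, because the smallest of `n` bundles is worth at most the average. -/

section Allocation

variable {ι : Type*} [Fintype ι] [DecidableEq ι] {n : ℕ}

theorem sum_val_of_isAlloc (v : ι → ℝ) {P : Fin n → Finset ι} (hP : isAlloc P) :
    ∑ k, val v (P k) = val v univ := by
  rw [_root_.val, ← hP.2, sum_biUnion fun a _ b _ hab => hP.1 a b hab]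
  rfl

theorem mul_iInf_val_le_of_isAlloc (v : ι → ℝ) {P : Fin n → Finset ι} (hP : isAlloc P) :
    n * ⨅ k, val v (P k) ≤ val v univ :=
  calc n * ⨅ k, val v (P k) = ∑ _k : Fin n, ⨅ k, val v (P k) := by simp
    _ ≤ ∑ k, val v (P k) :=
      sum_le_sum fun k _ => ciInf_le (Set.finite_range _).bddBelow k
    _ = val v univ := sum_val_of_isAlloc v hP

theorem isMMS_of_isAlloc_of_val_eq [NeZero n] {v : ι → ℝ} {P : Fin n → Finset ι} {μ : ℝ}
    (hP : isAlloc P) (hμ : ∀ k, val v (P k) = μ) : isMMS n v μ := by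
  refine ⟨⟨P, hP, by simp [hμ]⟩, ?_⟩
  rintro _ ⟨Q, hQ, rfl⟩
  have hn : (0 : ℝ) < n := by exact_mod_cast Nat.pos_of_neZero n
  have hP_total : val v univ = n * μ := by simp [← sum_val_of_isAlloc v hP, hμ]
  exact le_of_mul_le_mul_left ((mul_iInf_val_le_of_isAlloc v hQ).trans hP_total.le) hn

def fiberAlloc (f : ι → Fin n) (k : Fin n) : Finset ι := univ.filter (f · = k)

theorem isAlloc_fiberAlloc (f : ι → Fin n) : isAlloc (fiberAlloc f) := by
  refine ⟨fun a b hab => disjoint_left.mpr ?_, ?_⟩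
  · simp only [fiberAlloc, mem_filter, mem_univ, true_and]
    rintro x rfl rfl
    exact hab rfl
  · ext x
    simp [fiberAlloc]

end Allocation

def itemBundle (n : ℕ) : Fin n ⊕ Fin (n - 1) → Fin n :=
  Sum.elim (fun j => ⟨0, j.pos⟩) (fun j => ⟨j + 1, by omega⟩)

theorem val_fiberAlloc_itemBundle {n : ℕ} {v : Fin n ⊕ Fin (n - 1) → ℝ} {c : ℝ}
    (hsmall : ∑ j, v (Sum.inl j) = c) (hbig : ∀ j, v (Sum.inr j) = c) (k : Fin n) :
    val v (fiberAlloc (itemBundle n) k) = c := by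
  simp only [_root_.val, fiberAlloc, sum_filter, Fintype.sum_sum_type, itemBundle, Sum.elim_inl,
    Sum.elim_inr, Fin.ext_iff]
  obtain ⟨_ | m, hm⟩ := k
  · simp [hsmall]
  · have hj : m < n - 1 := by omega
    simpa [hbig, Fin.ext_iff] using Fintype.sum_ite_eq' (⟨m, hj⟩ : Fin (n - 1)) fun _ => c

theorem sum_ite_eq_add_mul {n : ℕ} (i : Fin n) (a b : ℝ) :
    ∑ j, (if j = i then a else b) = a + ((n : ℝ) - 1) * b := by
  rw [← add_sum_erase _ _ (mem_univ i), if_pos rfl,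
    sum_congr rfl fun j hj => if_neg (ne_of_mem_erase hj)]
  simp [card_erase_of_mem, Nat.cast_pred i.pos]

theorem stmt10_general (n : ℕ) (hn : 2 ≤ n) (ε : ℝ)
    (v : Fin n → (Fin n ⊕ Fin (n - 1)) → ℝ)
    (hvs : ∀ i j : Fin n,
      v i (Sum.inl j) = if j = i then 1 + ε else 1 - ε / ((n : ℝ) - 1))
    (hvb : ∀ (i : Fin n) (j : Fin (n - 1)), v i (Sum.inr j) = (n : ℝ)) :
    ∀ i : Fin n, isMMS n (v i) (n : ℝ) ∧ val (v i) Finset.univ / n = (n : ℝ) := by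
  intro i
  have : NeZero n := ⟨by omega⟩
  have hsmall : ∑ j, v i (Sum.inl j) = n := by
    have hn1 : (n : ℝ) - 1 ≠ 0 := by
      have : (2 : ℝ) ≤ n := by exact_mod_cast hn
      linarith
    simp only [hvs, sum_ite_eq_add_mul]
    field_simp
    ring
  have hbundle := val_fiberAlloc_itemBundle hsmall (hvb i)
  have hP := isAlloc_fiberAlloc (itemBundle n)
  refine ⟨isMMS_of_isAlloc_of_val_eq hP hbundle, ?_⟩
  have hn0 : (n : ℝ) ≠ 0 := by exact_mod_cast NeZero.ne n
  rw [← sum_val_of_isAlloc _ hP]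
  simp [hbundle, hn0]

/-- in the instance with `n ≥ 2` agents and `2n−1` items
`{s_1,…,s_n, b_1,…,b_{n−1}}` (small items `Sum.inl`, big items `Sum.inr`),
where agent `i` values `s_i` at `1+ε`, values `s_j` (for `j ≠ i`) at `1 − ε/(n−1)`,
and values each `b_j` at `n`, every agent has `MMS_i = n` and `PS_i = n`. -/
theorem stmt10 (n : ℕ) (hn : 2 ≤ n) (ε : ℝ) (hε0 : 0 < ε) (hε1 : ε < 1)
    (v : Fin n → (Fin n ⊕ Fin (n - 1)) → ℝ)
    (hvs : ∀ i j : Fin n,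
      v i (Sum.inl j) = if j = i then 1 + ε else 1 - ε / ((n : ℝ) - 1))
    (hvb : ∀ (i : Fin n) (j : Fin (n - 1)), v i (Sum.inr j) = (n : ℝ)) :
    ∀ i : Fin n, isMMS n (v i) (n : ℝ) ∧ val (v i) Finset.univ / n = (n : ℝ) :=
  stmt10_general n hn ε v hvs hvb
end

section
/- For every allocation instance with n agents and additive valuations, there exists a probability distribution over finitely many allocations such that: (a) for every agent i and item j, the probability that agent i receives item j equals 1/n (so the distribution implements the uniform fractional allocation, and in particular is ex-ante envy free and ex-ante proportional); and (b) every allocation in the support is Prop1. -/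
/-!
After padding with zero-valued dummy items, there are `n * K` items. Each agent sorts them by
decreasing value and cuts the list into `K` blocks of `n` items. Relate item `j` to the slot
`(i, b)` when `j` lies in agent `i`'s `b`-th block: this bipartite graph is `n`-regular, so by
Birkhoff's theorem the matrix with entries `1 / n` on its edges is a convex combination of
perfect matchings. Every agent then receives each item with probability `1 / n`, and under each
matching she receives exactly one item from each of her blocks. Such a bundle is Prop1: her item
from block `b` is worth at least every item of block `b + 1`, so the total value is at most `n`
times the value of her bundle plus the best item of the top block that she does not hold.
-/

open Finset

/-- An allocation is Prop1 if every agent either attains her proportional share,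
or does so after adding one item not in her bundle. -/
def isProp1 {ι : Type*} [Fintype ι] {n : ℕ} (v : Fin n → ι → ℝ)
    (A : Fin n → Finset ι) : Prop :=
  ∀ i : Fin n, val (v i) (A i) ≥ val (v i) Finset.univ / n ∨
    ∃ j, j ∉ A i ∧ val (v i) (A i) + v i j ≥ val (v i) Finset.univ / n

section Prop1

theorem sum_range_succ_le_mul_add {F G : ℕ → ℝ} {c d : ℝ} (h0 : F 0 ≤ d * c)
    (hsucc : ∀ b, F (b + 1) ≤ d * G b) (K : ℕ) :
    ∑ b ∈ range (K + 1), F b ≤ d * (c + ∑ b ∈ range K, G b) := by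
  rw [sum_range_succ', mul_add, mul_sum, add_comm (d * c)]
  exact add_le_add (sum_le_sum fun b _ => hsucc b) h0

variable {ι : Type*} {u : ι → ℝ}

theorem sum_range_val_filter {S : Finset ι} {g : ι → ℕ} {N : ℕ}
    (h : ∀ j ∈ S, g j < N) : ∑ b ∈ range N, val u {j ∈ S | g j = b} = val u S :=
  sum_fiberwise_of_maps_to (fun j hj => mem_range.2 (h j hj)) u

theorem le_val_filter_eq (hu : 0 ≤ u) {β : ι → ℕ} {A : Finset ι} {a : ι} (ha : a ∈ A) :
    u a ≤ val u {j ∈ A | β j = β a} :=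
  single_le_sum (fun j _ => hu j) (mem_filter.2 ⟨ha, rfl⟩)

variable [Fintype ι] {n K : ℕ} {β : ι → ℕ}

theorem val_filter_eq_le_mul (hβ : ∀ j, β j < K) (hcard : ∀ b < K, #{j | β j = b} = n)
    {b : ℕ} {c : ℝ} (hc : 0 ≤ c) (hle : ∀ j, β j = b → u j ≤ c) :
    val u {j | β j = b} ≤ n * c := by
  have hcard_le : #{j | β j = b} ≤ n := by
    by_cases hb : b < K
    · exact (hcard b hb).le
    · rw [card_eq_zero.2 (filter_eq_empty_iff.2 fun j _ (hj : β j = b) => hb (hj ▸ hβ j))]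
      exact n.zero_le
  calc val u {j | β j = b} ≤ #{j | β j = b} • c :=
        sum_le_card_nsmul _ _ _ fun j hj => hle j (mem_filter.1 hj).2
    _ ≤ n * c := by rw [nsmul_eq_mul]; gcongr

theorem val_filter_succ_le_mul (hu : 0 ≤ u) (hβ : ∀ j, β j < K)
    (hcard : ∀ b < K, #{j | β j = b} = n) (hmono : ∀ j j', β j < β j' → u j' ≤ u j)
    {A : Finset ι} (hA : ∀ b < K, #{j ∈ A | β j = b} = 1) (b : ℕ) :
    val u {j | β j = b + 1} ≤ n * val u {j ∈ A | β j = b} :=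
  val_filter_eq_le_mul hβ hcard (sum_nonneg fun j _ => hu j) fun j hj => by
    obtain ⟨a, ha⟩ := card_pos.1 (by rw [hA b (by have := hβ j; omega)]; exact one_pos)
    obtain ⟨haA, rfl⟩ := mem_filter.1 ha
    exact (hmono a j (by omega)).trans (le_val_filter_eq hu haA)

theorem eq_univ_of_card_filter_eq_one (hβ : ∀ j, β j < K)
    (hcard : ∀ b < K, #{j | β j = b} = n) (hn : n ≤ 1) {A : Finset ι}
    (hA : ∀ b < K, #{j ∈ A | β j = b} = 1) : A = univ :=
  eq_univ_of_forall fun y => by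
    have hsub : {j ∈ A | β j = β y} ⊆ ({j | β j = β y} : Finset ι) :=
      filter_subset_filter _ (subset_univ A)
    have heq := eq_of_subset_of_card_le hsub (by rw [hcard _ (hβ y), hA _ (hβ y)]; exact hn)
    have hy : y ∈ ({j ∈ A | β j = β y} : Finset ι) := by
      rw [heq]; exact mem_filter.2 ⟨mem_univ y, rfl⟩
    exact (mem_filter.1 hy).1

theorem exists_forall_le_of_block_zero (hmono : ∀ j j', β j < β j' → u j' ≤ u j)
    (h : ({j | β j = 0} : Finset ι).Nonempty) : ∃ t, β t = 0 ∧ ∀ y, u y ≤ u t := by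
  obtain ⟨t, ht, htmax⟩ := exists_max_image _ u h
  refine ⟨t, (mem_filter.1 ht).2, fun y => ?_⟩
  rcases (β y).eq_zero_or_pos with hy | hy
  · exact htmax y (mem_filter.2 ⟨mem_univ y, hy⟩)
  · exact hmono t y (by rw [(mem_filter.1 ht).2]; exact hy)

theorem isProp1_agent_of_one_per_block (hu : 0 ≤ u) (hβ : ∀ j, β j < K)
    (hcard : ∀ b < K, #{j | β j = b} = n) (hmono : ∀ j j', β j < β j' → u j' ≤ u j)
    {A : Finset ι} (hA : ∀ b < K, #{j ∈ A | β j = b} = 1) :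
    val u A ≥ val u univ / n ∨ ∃ j, j ∉ A ∧ val u A + u j ≥ val u univ / n := by
  have hdom := val_filter_succ_le_mul hu hβ hcard hmono hA
  have hF : ∀ N, K ≤ N → ∑ b ∈ range N, val u {j | β j = b} = val u univ := fun N hN =>
    sum_range_val_filter fun j _ => (hβ j).trans_le hN
  have hG : ∀ N, K ≤ N → ∑ b ∈ range N, val u {j ∈ A | β j = b} = val u A := fun N hN =>
    sum_range_val_filter fun j _ => (hβ j).trans_le hN
  have hval : ∀ S, 0 ≤ val u S := fun S => sum_nonneg fun j _ => hu j
  rcases K.eq_zero_or_pos with rfl | hK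
  · left
    rw [← hF 0 le_rfl, sum_range_zero, zero_div]
    exact hval A
  rcases le_or_gt n 1 with hn | hn
  · left
    rw [eq_univ_of_card_filter_eq_one hβ hcard hn hA]
    interval_cases n <;> simp [hval]
  have hB0 : 1 < #{j | β j = 0} := by rw [hcard 0 hK]; exact hn
  obtain ⟨t, ht, htop⟩ :=
    exists_forall_le_of_block_zero hmono (card_pos.1 (zero_lt_one.trans hB0))
  have hpos : (0 : ℝ) < n := by positivity
  right
  by_cases htA : t ∈ A
  · -- `t` is the item of `A` in the top block, so another item `s` of the top block is missing
    obtain ⟨s, hs, hst⟩ := exists_mem_ne hB0 t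
    have hs0 := (mem_filter.1 hs).2
    have hsA : s ∉ A := fun hsA => hst <| card_le_one.1 (hA 0 hK).le s
      (mem_filter.2 ⟨hsA, hs0⟩) t (mem_filter.2 ⟨htA, ht⟩)
    refine ⟨s, hsA, ?_⟩
    have htop_block : val u {j | β j = 0} ≤ n * val u {j ∈ A | β j = 0} :=
      val_filter_eq_le_mul hβ hcard (hval _) fun j _ =>
        (htop j).trans (ht ▸ le_val_filter_eq hu htA)
    have hrest := sum_range_succ_le_mul_add (c := u s) (F := fun b => val u {j | β j = b + 1})
      (G := fun b => val u {j ∈ A | β j = b + 1})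
      (val_filter_eq_le_mul hβ hcard (hu s) fun j hj => hmono s j (by omega))
      (fun b => hdom (b + 1)) K
    rw [ge_iff_le, div_le_iff₀ hpos, ← hF (K + 2) (by omega), ← hG (K + 1) (by omega),
      sum_range_succ' _ (K + 1), sum_range_succ' (fun b => val u {j ∈ A | β j = b}) K]
    linarith
  · refine ⟨t, htA, ?_⟩
    have key := sum_range_succ_le_mul_add (F := fun b => val u {j | β j = b})
      (val_filter_eq_le_mul hβ hcard (hu t) fun j _ => htop j) hdom K
    rw [ge_iff_le, div_le_iff₀ hpos, ← hF (K + 1) (by omega), ← hG K le_rfl]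
    linarith

end Prop1

section Blocks

variable {ι : Type*} [Fintype ι]

theorem exists_equiv_fin_antitone (u : ι → ℝ) :
    ∃ e : Fin (Fintype.card ι) ≃ ι, Antitone (u ∘ e) := by
  let e₀ := (Fintype.equivFin ι).symm
  refine ⟨(Tuple.sort fun t => OrderDual.toDual (u (e₀ t))).trans e₀, ?_⟩
  exact monotone_toDual_comp_iff.1 (Tuple.monotone_sort fun t => OrderDual.toDual (u (e₀ t)))

theorem card_filter_fst_val_eq {K n b : ℕ} (hb : b < K) :
    #{x : Fin K × Fin n | (x.1 : ℕ) = b} = n := by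
  have : ({x : Fin K × Fin n | (x.1 : ℕ) = b} : Finset _) = {⟨b, hb⟩} ×ˢ univ := by
    ext x
    simp only [mem_filter, mem_univ, true_and, mem_product, mem_singleton, and_true, Fin.ext_iff]
  rw [this, card_product, card_singleton, card_univ, Fintype.card_fin, one_mul]

theorem exists_blocks (u : ι → ℝ) {n K : ℕ} (h : Fintype.card ι = n * K) :
    ∃ β : ι → ℕ, (∀ j, β j < K) ∧ (∀ b < K, #{j | β j = b} = n) ∧
      ∀ j j', β j < β j' → u j' ≤ u j := by
  obtain ⟨e, he⟩ := exists_equiv_fin_antitone u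
  let q : ι ≃ Fin K × Fin n :=
    e.symm.trans ((finCongr (h.trans (mul_comm n K))).trans finProdFinEquiv.symm)
  have hrank : ∀ j, (e.symm j : ℕ) = (q j).2 + n * (q j).1 := fun j => by
    rw [← finProdFinEquiv_apply_val]; simp [q, Nat.mod_add_div]
  refine ⟨fun j => (q j).1, fun j => (q j).1.isLt, fun b hb => ?_, fun j j' hjj' => ?_⟩
  · exact (card_equiv q (by simp)).trans (card_filter_fst_val_eq hb)
  · have hle : e.symm j ≤ e.symm j' := by
      rw [Fin.le_iff_val_le_val, hrank, hrank]
      have := (q j).2.isLt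
      nlinarith
    simpa using he hle

end Blocks

theorem exists_perm_weights_of_regular {ι : Type*} [Fintype ι] [DecidableEq ι]
    (R : ι → ι → Prop) [DecidableRel R] {d : ℕ} (hd : 0 < d)
    (hrow : ∀ j, #{c | R j c} = d) (hcol : ∀ c, #{j | R j c} = d) :
    ∃ w : Equiv.Perm ι → ℝ, (∀ σ, 0 ≤ w σ) ∧ ∑ σ, w σ = 1 ∧
      (∀ j c, ∑ σ with σ j = c, w σ = if R j c then (d : ℝ)⁻¹ else 0) ∧
      ∀ σ, 0 < w σ → ∀ j, R j (σ j) := by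
  let M : Matrix ι ι ℝ := fun j c => if R j c then (d : ℝ)⁻¹ else 0
  have hsum : ∀ (s : Finset ι) (P : ι → Prop) [DecidablePred P],
      #{x ∈ s | P x} = d → ∑ x ∈ s, (if P x then (d : ℝ)⁻¹ else 0) = 1 := fun s P _ h => by
    rw [← sum_filter, sum_const, h, nsmul_eq_mul, mul_inv_cancel₀ (by positivity)]
  have hM : M ∈ doublyStochastic ℝ ι := mem_doublyStochastic_iff_sum.2
    ⟨fun j c => by positivity, fun j => hsum _ _ (hrow j), fun c => hsum _ _ (hcol c)⟩
  obtain ⟨w, hw0, hw1, hwM⟩ := exists_eq_sum_perm_of_mem_doublyStochastic hM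
  have hentry : ∀ j c, ∑ σ with σ j = c, w σ = M j c := fun j c => by
    rw [← hwM, Matrix.sum_apply, sum_filter]
    refine sum_congr rfl fun σ _ => ?_
    simp [Equiv.Perm.permMatrix, PEquiv.toMatrix_apply]
  refine ⟨w, hw0, hw1, hentry, fun σ hσ j => ?_⟩
  by_contra hR
  have hle : w σ ≤ ∑ τ with τ j = σ j, w τ :=
    single_le_sum (fun τ _ => hw0 τ) (mem_filter.2 ⟨mem_univ σ, rfl⟩)
  rw [hentry] at hle
  simp only [M, hR, if_false] at hle
  linarith

theorem val_sumElim_zero {ι κ : Type*} (u : ι → ℝ) (S : Finset (ι ⊕ κ)) :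
    val (Sum.elim u 0) S = val u S.toLeft := by
  unfold _root_.val
  conv_lhs => rw [← toLeft_disjSum_toRight (u := S)]
  simp [sum_disjSum]

theorem isAlloc_toLeft {ι κ : Type*} [Fintype ι] [DecidableEq ι] [Fintype κ] [DecidableEq κ]
    {n : ℕ} {A : Fin n → Finset (ι ⊕ κ)} (h : isAlloc A) :
    isAlloc fun i => (A i).toLeft := by
  refine ⟨fun i i' hii' => disjoint_left.2 fun j hj hj' => ?_, eq_univ_of_forall fun j => ?_⟩
  · exact disjoint_left.1 (h.1 i i' hii') (mem_toLeft.1 hj) (mem_toLeft.1 hj')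
  · obtain ⟨i, -, hi⟩ := mem_biUnion.1 (h.2 ▸ mem_univ (Sum.inl j))
    exact mem_biUnion.2 ⟨i, mem_univ i, mem_toLeft.2 hi⟩

theorem isProp1_toLeft {ι κ : Type*} [Fintype ι] [Fintype κ] {n : ℕ} {v : Fin n → ι → ℝ}
    {A : Fin n → Finset (ι ⊕ κ)}
    (h : isProp1 (fun i => Sum.elim (v i) (0 : κ → ℝ)) A) :
    isProp1 v fun i => (A i).toLeft := by
  intro i
  have huniv : val (v i) univ = val (Sum.elim (v i) (0 : κ → ℝ)) univ := by
    rw [val_sumElim_zero]; congr; ext j; simp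
  simp only [huniv, ← val_sumElim_zero]
  rcases h i with hi | ⟨j | d, hj, hi⟩
  · exact Or.inl hi
  · exact Or.inr ⟨j, fun hj' => hj (mem_toLeft.1 hj'), hi⟩
  · exact Or.inl (by simpa using hi)

section Lottery

structure IsUniformProp1Lottery {Ω ι : Type*} [Fintype Ω] [Fintype ι] [DecidableEq ι] {n : ℕ}
    (v : Fin n → ι → ℝ) (p : Ω → ℝ) (A : Ω → Fin n → Finset ι) : Prop where
  nonneg : ∀ k, 0 ≤ p k
  sum_eq_one : ∑ k, p k = 1
  alloc : ∀ k, isAlloc (A k)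
  marginal : ∀ i j, ∑ k, p k * (if j ∈ A k i then (1 : ℝ) else 0) = 1 / n
  prop1 : ∀ k, 0 < p k → isProp1 v (A k)

variable {Ω ι : Type*} [Fintype Ω] [Fintype ι] [DecidableEq ι] {n : ℕ}

theorem IsUniformProp1Lottery.comp_equiv {Ω' : Type*} [Fintype Ω'] {v : Fin n → ι → ℝ}
    {p : Ω → ℝ} {A : Ω → Fin n → Finset ι} (h : IsUniformProp1Lottery v p A) (e : Ω' ≃ Ω) :
    IsUniformProp1Lottery v (p ∘ e) (A ∘ e) where
  nonneg k := h.nonneg (e k)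
  sum_eq_one := (e.sum_comp p).trans h.sum_eq_one
  alloc k := h.alloc (e k)
  marginal i j :=
    (e.sum_comp fun k => p k * (if j ∈ A k i then (1 : ℝ) else 0)).trans (h.marginal i j)
  prop1 k hk := h.prop1 (e k) hk

theorem IsUniformProp1Lottery.toLeft {κ : Type*} [Fintype κ] [DecidableEq κ]
    {v : Fin n → ι → ℝ} {p : Ω → ℝ} {A : Ω → Fin n → Finset (ι ⊕ κ)}
    (h : IsUniformProp1Lottery (fun i => Sum.elim (v i) (0 : κ → ℝ)) p A) :
    IsUniformProp1Lottery v p fun k i => (A k i).toLeft where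
  nonneg := h.nonneg
  sum_eq_one := h.sum_eq_one
  alloc k := isAlloc_toLeft (h.alloc k)
  marginal i j := by simpa only [mem_toLeft] using h.marginal i (Sum.inl j)
  prop1 k hk := isProp1_toLeft (h.prop1 k hk)

end Lottery

theorem isAlloc_filter_eq {ι : Type*} [Fintype ι] [DecidableEq ι] {n : ℕ} (f : ι → Fin n) :
    isAlloc fun i => ({j | f j = i} : Finset ι) := by
  refine ⟨fun i i' hii' => disjoint_filter.2 fun j _ hi hi' => hii' (hi ▸ hi'), ?_⟩
  exact eq_univ_of_forall fun j =>
    mem_biUnion.2 ⟨f j, mem_univ _, mem_filter.2 ⟨mem_univ j, rfl⟩⟩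

theorem exists_isUniformProp1Lottery_of_card_eq_mul {ι : Type*} [Fintype ι] [DecidableEq ι]
    {n K : ℕ} (hn : 0 < n) (v : Fin n → ι → ℝ) (hv : ∀ i j, 0 ≤ v i j)
    (h : Fintype.card ι = n * K) :
    ∃ (p : Equiv.Perm ι → ℝ) (A : Equiv.Perm ι → Fin n → Finset ι),
      IsUniformProp1Lottery v p A := by
  choose β hβK hβcard hβmono using fun i => exists_blocks (v i) h
  let e : ι ≃ Fin n × Fin K := Fintype.equivOfCardEq (by simp [h])
  -- slot `e.symm (i, b)` is agent `i`'s share of her `b`-th block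
  let R : ι → ι → Prop := fun j c => β (e c).1 j = (e c).2
  have hrow : ∀ j, #{c | R j c} = n := fun j => by
    have hslots : ({x : Fin n × Fin K | β x.1 j = x.2} : Finset _) =
        univ.image fun i => (i, ⟨β i j, hβK i j⟩) := by
      ext ⟨i, b⟩
      simp only [mem_filter, mem_univ, true_and, mem_image, Prod.mk.injEq, exists_eq_left]
      exact ⟨fun hb => Fin.ext hb, congrArg Fin.val⟩
    rw [card_equiv e (t := {x | β x.1 j = x.2}) (by simp [R]), hslots,
      card_image_of_injective _ fun i i' hii' => (Prod.mk.inj hii').1, card_univ,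
      Fintype.card_fin]
  obtain ⟨w, hw0, hw1, hwR, hsupp⟩ :=
    exists_perm_weights_of_regular R hn hrow fun c => hβcard _ _ (e c).2.isLt
  refine ⟨w, fun σ i => {j | (e (σ j)).1 = i}, ⟨hw0, hw1, fun σ => isAlloc_filter_eq _,
    fun i j => ?_, fun σ hσ i => ?_⟩⟩
  · have hfiber : ∀ b : Fin K, ∑ σ with (e (σ j)).1 = i ∧ (e (σ j)).2 = b, w σ =
        if β i j = b then (n : ℝ)⁻¹ else 0 := fun b => by
      have hslot := hwR j (e.symm (i, b))
      simp only [R, Equiv.apply_symm_apply] at hslot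
      rw [← hslot]
      exact sum_congr (filter_congr fun σ _ => by simp [Equiv.eq_symm_apply, Prod.ext_iff])
        fun _ _ => rfl
    simp only [mem_filter, mem_univ, true_and, mul_ite, mul_one, mul_zero]
    rw [← sum_filter, ← sum_fiberwise _ (fun σ => (e (σ j)).2)]
    simp only [filter_filter, hfiber]
    rw [Fin.sum_univ_eq_sum_range (fun b => if β i j = b then (n : ℝ)⁻¹ else 0), sum_ite_eq,
      if_pos (mem_range.2 (hβK i j)), one_div]
  · refine isProp1_agent_of_one_per_block (hv i) (hβK i) (hβcard i) (hβmono i) fun b hb => ?_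
    refine card_eq_one.2 ⟨σ.symm (e.symm (i, ⟨b, hb⟩)), ext fun j => ?_⟩
    have hj := hsupp σ hσ j
    simp only [R] at hj
    simp only [mem_filter, mem_univ, true_and, mem_singleton, Equiv.eq_symm_apply, Prod.ext_iff]
    constructor
    · rintro ⟨rfl, rfl⟩; exact ⟨rfl, Fin.ext hj.symm⟩
    · rintro ⟨rfl, hb⟩; exact ⟨rfl, hj.trans (congrArg Fin.val hb)⟩

/-- there is a distribution over finitely many allocations in which
every agent receives every item with probability exactly `1/n` (so it implements
the uniform fractional allocation, hence is ex-ante envy free and ex-ante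
proportional), and every allocation in the support is Prop1. -/
theorem stmt13 {ι : Type*} [Fintype ι] [DecidableEq ι] (n : ℕ) (hn : 1 ≤ n)
    (v : Fin n → ι → ℝ) (hv : ∀ i j, 0 ≤ v i j) :
    ∃ (ℓ : ℕ) (A : Fin ℓ → Fin n → Finset ι) (p : Fin ℓ → ℝ),
      (∀ k, 0 ≤ p k) ∧ (∑ k, p k = 1) ∧ (∀ k, isAlloc (A k)) ∧
      (∀ (i : Fin n) (j : ι),
        (∑ k, p k * (if j ∈ A k i then (1 : ℝ) else 0)) = 1 / n) ∧
      (∀ k, 0 < p k → isProp1 v (A k)) := by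
  obtain ⟨p, A, h⟩ := exists_isUniformProp1Lottery_of_card_eq_mul
    (ι := ι ⊕ Fin ((n - 1) * Fintype.card ι)) (K := Fintype.card ι) hn
    (fun i => Sum.elim (v i) 0) (fun i => by rintro (j | j); exacts [hv i j, le_rfl])
    (by rw [Fintype.card_sum, Fintype.card_fin, add_comm, ← Nat.succ_mul, Nat.succ_eq_add_one,
      Nat.sub_add_cancel hn])
  have h' := h.toLeft.comp_equiv (Fintype.equivFin _).symm
  exact ⟨_, _, _, h'.nonneg, h'.sum_eq_one, h'.alloc, h'.marginal, h'.prop1⟩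
end

section
/- For every n ≥ 1, consider the chores instance with n agents and n+1 items in which every agent values every item at −1. Then for every agent i the truncated proportional share for chores satisfies TPS_i = −(n+1)/n, and in every allocation some agent i receives value v_i(A_i) ≤ −2 (that is, her cost is at least a factor 2 − 2/(n+1) times her TPS cost). -/
open Finset

/-- The truncated proportional share for chores:
`TPS_i = min(PS_i, min_{j ∈ M} v_i(j))`. -/
noncomputable def choresTPS {ι : Type*} [Fintype ι] (n : ℕ)
    (hne : (Finset.univ : Finset ι).Nonempty) (v : ι → ℝ) : ℝ :=
  min (val v Finset.univ / n) (Finset.univ.inf' hne v)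

lemma val_const {ι : Type*} (c : ℝ) (S : Finset ι) : val (fun _ => c) S = S.card * c := by
  simp [_root_.val]

lemma choresTPS_const {ι : Type*} [Fintype ι] {n : ℕ} (hn : 0 < n) (hcard : n ≤ Fintype.card ι)
    (hne : (Finset.univ : Finset ι).Nonempty) {c : ℝ} (hc : c ≤ 0) :
    choresTPS n hne (fun _ => c) = Fintype.card ι * c / n := by
  have hn' : (0 : ℝ) < n := by exact_mod_cast hn
  have hcard' : (n : ℝ) ≤ Fintype.card ι := by exact_mod_cast hcard
  rw [choresTPS, val_const, card_univ, inf'_const, min_eq_left]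
  rw [div_le_iff₀ hn', mul_comm c]
  exact mul_le_mul_of_nonpos_right hcard' hc

lemma exists_one_lt_card_of_biUnion_eq_univ {ι : Type*} [Fintype ι] [DecidableEq ι] {n : ℕ}
    {A : Fin n → Finset ι} (hA : univ.biUnion A = univ) (hcard : n < Fintype.card ι) :
    ∃ i, 1 < (A i).card := by
  have hsum : ∑ _i : Fin n, 1 < ∑ i, (A i).card :=
    calc ∑ _i : Fin n, 1 = n := by simp
      _ < Fintype.card ι := hcard
      _ = (univ.biUnion A).card := by rw [hA, card_univ]
      _ ≤ ∑ i, (A i).card := card_biUnion_le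
  obtain ⟨i, -, hi⟩ := exists_lt_of_sum_lt hsum
  exact ⟨i, hi⟩

/-- in the chores instance with `n` agents and `n+1` chores each
valued at `−1`, every agent's chores TPS equals `−(n+1)/n`, and in every
allocation some agent receives value at most `−2` (so her cost is at least a
`2 − 2/(n+1)` factor times her TPS cost). -/
theorem stmt15 (n : ℕ) (hn : 1 ≤ n) :
    choresTPS (ι := Fin (n + 1)) n Finset.univ_nonempty (fun _ => (-1 : ℝ)) =
      -(((n : ℝ) + 1) / n) ∧
    (∀ A : Fin n → Finset (Fin (n + 1)), isAlloc A →
      ∃ i, val (fun _ => (-1 : ℝ)) (A i) ≤ -2) := by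
  refine ⟨?_, fun A hA => ?_⟩
  · rw [choresTPS_const hn (by simp) _ (by norm_num), Fintype.card_fin]
    push_cast
    ring
  · obtain ⟨i, hi⟩ := exists_one_lt_card_of_biUnion_eq_univ hA.2 (by simp)
    have hi' : (2 : ℝ) ≤ (A i).card := by exact_mod_cast hi
    exact ⟨i, by rw [val_const]; linarith⟩
end
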